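/- arXiv:1312.4983 — 2 statements merged into one kernel-verified Lean document; each statement's English description precedes it below -/
import Mathlib

section
/- Fix n ≥ 1 and let the right and left forward branching processes have the random initial conditions W_0 = R_n := Σ_{j=1}^n B_{0,j} and Z_0 = n − R_n. Then on the event {ρ_n < ∞} one has W_i = U_i^{ρ_n} and Z_i = D_{−i}^{ρ_n} for all i ≥ 0. Moreover, the sequences (W_i)_{i≥1} and (Z_i)_{i≥1} are conditionally independent given (W_0, Z_0). -/
open Filter Finset
open scoped ENNReal NNReal

noncomputable section

/-- Number of `true`s among the first `m` values of the Boolean sequence `b`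
(i.e. `#{1 ≤ j ≤ m : B_j = 1}` with 0-based indexing). -/
def countTrue (b : ℕ → Bool) (m : ℕ) : ℕ := ((Finset.range m).filter fun j => b j = true).card

/-- Number of `false`s among the first `m` values of the Boolean sequence `b`. -/
def countFalse (b : ℕ → Bool) (m : ℕ) : ℕ := ((Finset.range m).filter fun j => b j = false).card

/-- The left forward branching process `Z` driven by the Bernoulli field `b`,
with initial condition `Z_0 = z`:
`Z_i = inf{m ≥ 0 : Σ_{j=1}^m B_{-i,j} = Z_{i-1}} - Z_{i-1}` for `i ≥ 1`. -/
def leftBP (b : ℤ → ℕ → Bool) (z : ℕ) : ℕ → ℕ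
  | 0 => z
  | i + 1 => sInf {m : ℕ | countTrue (b (-((i : ℤ) + 1))) m = leftBP b z i} - leftBP b z i

/-- The right forward branching process `W` driven by the Bernoulli field `b`,
with initial condition `W_0 = w`:
`W_i = inf{m ≥ 0 : Σ_{j=1}^m (1 - B_{i,j}) = W_{i-1}} - W_{i-1}` for `i ≥ 1`. -/
def rightBP (b : ℤ → ℕ → Bool) (w : ℕ) : ℕ → ℕ
  | 0 => w
  | i + 1 => sInf {m : ℕ | countFalse (b ((i : ℤ) + 1)) m = rightBP b w i} - rightBP b w i

/-- The backward branching process `V` driven by the Bernoulli field `b`,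
with initial condition `V_0 = v`:
`V_{i+1} = inf{m ≥ 0 : Σ_{j=1}^m B_{i,j} = V_i + 1} - V_i - 1`. -/
def backBP (b : ℤ → ℕ → Bool) (v : ℕ) : ℕ → ℕ
  | 0 => v
  | i + 1 => sInf {m : ℕ | countTrue (b (i : ℤ)) m = backBP b v i + 1} - (backBP b v i + 1)

/-- `τ_x^ξ = inf{t : ξ_t ≥ x}`, the first time the process `ξ` is above level `x`
(`= ∞` if there is no such time). -/
def tauAbove (ξ : ℕ → ℕ) (x : ℝ) : ℕ∞ := sInf {t : ℕ∞ | ∃ k : ℕ, t = k ∧ x ≤ (ξ k : ℝ)}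

/-- `σ_x^ξ = inf{t : ξ_t ≤ x}`, the first time the process `ξ` is below level `x`
(`= ∞` if there is no such time). -/
def sigmaBelow (ξ : ℕ → ℕ) (x : ℝ) : ℕ∞ := sInf {t : ℕ∞ | ∃ k : ℕ, t = k ∧ (ξ k : ℝ) ≤ x}

/-- A setup for a one-dimensional excited random walk in an i.i.d. cookie environment with
at most `M` cookies per site, satisfying assumptions (A1)-(A3), together with the auxiliary
Bernoulli random variables `B_{x,j}` (which, conditionally on the cookie environment, are
independent with `B_{x,j} ~ Bernoulli(ω(x,j))`) and the walk `X` constructed from them.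
Cookie indices are 0-based: `cookie ω x j` is the cookie used on the `(j+1)`-th visit to `x`. -/
structure ERWSetup where
  /-- the underlying sample space -/
  Ω : Type
  [mΩ : MeasurableSpace Ω]
  /-- the (averaged) probability measure -/
  μ : MeasureTheory.Measure Ω
  isProb : MeasureTheory.IsProbabilityMeasure μ
  /-- the number of cookies per site -/
  M : ℕ
  /-- the random cookie environment -/
  cookie : Ω → ℤ → ℕ → ℝ
  /-- the auxiliary Bernoulli random variables -/
  B : Ω → ℤ → ℕ → Bool
  /-- the excited random walk -/
  X : ℕ → Ω → ℤ
  meas_cookie : Measurable cookie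
  meas_B : Measurable B
  meas_X : ∀ n, Measurable (X n)
  cookie_mem : ∀ ω x j, cookie ω x j ∈ Set.Icc (0 : ℝ) 1
  /-- (A1): almost surely, all cookies beyond the first `M` at each site equal `1/2` -/
  A1 : ∀ᵐ ω ∂μ, ∀ (x : ℤ) (j : ℕ), M ≤ j → cookie ω x j = 1 / 2
  /-- (A2): the cookie stacks at distinct sites are independent -/
  A2_indep : ProbabilityTheory.iIndepFun (fun x ω => cookie ω x) μ
  /-- (A2): the cookie stacks at distinct sites are identically distributed -/
  A2_ident : ∀ x y : ℤ,
    ProbabilityTheory.IdentDistrib (fun ω => cookie ω x) (fun ω => cookie ω y) μ μ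
  /-- (A3), positive part -/
  A3_pos : 0 < ∫ ω, ∏ j ∈ Finset.range M, cookie ω 0 j ∂μ
  /-- (A3), negative part -/
  A3_neg : 0 < ∫ ω, ∏ j ∈ Finset.range M, (1 - cookie ω 0 j) ∂μ
  /-- conditionally on the cookie environment, the `B_{x,j}` are independent with
  `B_{x,j} ~ Bernoulli(ω(x,j))` (stated via conditional expectations given the σ-algebra
  generated by the environment) -/
  condB : ∀ (s : Finset (ℤ × ℕ)) (bv : ℤ × ℕ → Bool),
    (MeasureTheory.condExp (MeasurableSpace.comap cookie inferInstance) μ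
        (fun ω => if ∀ p ∈ s, B ω p.1 p.2 = bv p then (1 : ℝ) else 0))
      =ᵐ[μ] fun ω => ∏ p ∈ s, (if bv p then cookie ω p.1 p.2 else 1 - cookie ω p.1 p.2)
  /-- the walk starts at the origin -/
  X_zero : ∀ ω, X 0 ω = 0
  /-- on the `j`-th visit to a site `x`, the walk steps right if `B_{x,j} = 1`
  and left if `B_{x,j} = 0` -/
  X_step : ∀ ω n, X (n + 1) ω = X n ω +
    (if B ω (X n ω) (((Finset.range (n + 1)).filter fun k => X k ω = X n ω).card - 1)
      then 1 else -1)

attribute [instance] ERWSetup.mΩ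

open MeasureTheory ProbabilityTheory

namespace ERWSetup

variable (S : ERWSetup)

/-- the parameter `δ = E[Σ_j (2ω(0,j) - 1)]` -/
def delta : ℝ := ∫ ω, ∑' j : ℕ, (2 * S.cookie ω 0 j - 1) ∂S.μ

/-- `T_m = inf{k ≥ 0 : X_k = m}`, the hitting time of the site `m` by the walk
(`= ∞` if `m` is never visited). -/
def T (m : ℤ) (ω : S.Ω) : ℕ∞ := sInf {t : ℕ∞ | ∃ k : ℕ, t = k ∧ S.X k ω = m}

/-- `ρ_k`, the time of the `k`-th return of the walk to the origin. -/
def ret : ℕ → S.Ω → ℕ∞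
  | 0, _ => 0
  | k + 1, ω => sInf {t : ℕ∞ | ∃ j : ℕ, t = j ∧ ret k ω < (j : ℕ∞) ∧ S.X j ω = 0}

/-- `U_x^n = #{k ≤ n : X_{k-1} = x, X_k = x+1}`, the number of steps to the right
from `x` in the first `n` steps. -/
def U (x : ℤ) (n : ℕ) (ω : S.Ω) : ℕ :=
  ((Finset.Icc 1 n).filter fun k => S.X (k - 1) ω = x ∧ S.X k ω = x + 1).card

/-- `D_x^n = #{k ≤ n : X_{k-1} = x, X_k = x-1}`, the number of steps to the left
from `x` in the first `n` steps. -/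
def D (x : ℤ) (n : ℕ) (ω : S.Ω) : ℕ :=
  ((Finset.Icc 1 n).filter fun k => S.X (k - 1) ω = x ∧ S.X k ω = x - 1).card

/-- `R_n = Σ_{j=1}^n B_{0,j}` -/
def R (n : ℕ) (ω : S.Ω) : ℕ := countTrue (S.B ω 0) n

/-- `L_n(x) = #{k < n : X_k = x}`, the local time of the walk at `x` before time `n`. -/
def L (n : ℕ) (x : ℤ) (ω : S.Ω) : ℕ := ((Finset.range n).filter fun k => S.X k ω = x).card

/-- `r_1^V = inf{i > 0 : V_i = 0}`, the first return to `0` of the backward branching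
process started at `V_0 = 0`. -/
def r1 (ω : S.Ω) : ℕ∞ := sInf {t : ℕ∞ | ∃ k : ℕ, t = k ∧ 0 < k ∧ backBP (S.B ω) 0 k = 0}

/-- `S_1^V = Σ_{i=0}^{r_1^V - 1} V_i`, the total progeny of the backward branching process
(started at `V_0 = 0`) before its first return to `0`. -/
def S1 (ω : S.Ω) : ℝ≥0∞ := ∑' i : ℕ, if (i : ℕ∞) < S.r1 ω then (backBP (S.B ω) 0 i : ℝ≥0∞) else 0

/-- `r̄ = E_V[r_1^V]`, the mean return time to `0` of the backward branching process. -/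
def rbar : ℝ := (∫⁻ ω, (S.r1 ω : ℝ≥0∞) ∂S.μ).toReal

end ERWSetup
open MeasureTheory ProbabilityTheory


/-!
Along the first `n` excursions of the walk from `0`, the walk uses exactly the coins
`B_{0,1}, …, B_{0,n}` at the origin, so `R_n` and `n - R_n` are the numbers of its right and left
steps from `0`. For `i ≥ 0`, every right step from `i` is matched by a later left step from
`i + 1`, because the walk returns to `0`; and the last departure from `i + 1` is a left step, so the
number of visits to `i + 1` is the first index at which the coins at `i + 1` have shown `U_i` left
steps. This is exactly the recursion of `W`; the left side follows by reflecting the walk and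
flipping the coins.

Once `R_n = m` is fixed, `W` reads only coins at sites `> 0`, `Z` only coins at sites `< 0`, and
`R_n` only coins at `0`. Coins at distinct sites are independent under the averaged measure, since
they are conditionally independent given the environment and the environment is i.i.d. across
sites; this gives the conditional independence.
-/

lemma countTrue_succ (b : ℕ → Bool) (m : ℕ) :
    countTrue b (m + 1) = countTrue b m + if b m then 1 else 0 := by
  cases h : b m <;> simp [countTrue, range_add_one, filter_insert, h]

lemma countFalse_succ (b : ℕ → Bool) (m : ℕ) :
    countFalse b (m + 1) = countFalse b m + if b m then 0 else 1 := by
  cases h : b m <;> simp [countFalse, range_add_one, filter_insert, h]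

lemma countTrue_add_countFalse (b : ℕ → Bool) (m : ℕ) :
    countTrue b m + countFalse b m = m := by
  simpa [countTrue, countFalse] using
    card_filter_add_card_filter_not (s := range m) (fun j => b j = true)

lemma countFalse_not (b : ℕ → Bool) (m : ℕ) : countFalse (fun j => !b j) m = countTrue b m := by
  simp [countFalse, countTrue]

lemma countFalse_mono (b : ℕ → Bool) : Monotone (countFalse b) := fun _ _ h =>
  card_le_card (filter_subset_filter _ (range_subset_range.2 h))

lemma sInf_countFalse_eq_zero (b : ℕ → Bool) : sInf {m | countFalse b m = countFalse b 0} = 0 :=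
  Nat.sInf_eq_zero.2 (Or.inl rfl)

lemma sInf_countFalse_eq_succ (b : ℕ → Bool) {k : ℕ} (hb : b k = false) :
    sInf {m | countFalse b m = countFalse b (k + 1)} = k + 1 := by
  refine le_antisymm (Nat.sInf_le rfl) (le_csInf ⟨_, rfl⟩ fun m (hm : _ = _) => ?_)
  by_contra! hlt
  have := countFalse_mono b (Nat.le_of_lt_succ hlt)
  rw [countFalse_succ, hb, if_neg Bool.false_ne_true] at hm
  omega

lemma measurable_countTrue (m : ℕ) : Measurable fun b : ℕ → Bool => countTrue b m := by
  induction m with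
  | zero => simp [countTrue]
  | succ m ih =>
    simp_rw [countTrue_succ]
    exact ih.add ((measurable_of_countable fun c : Bool => if c then 1 else 0).comp
      (measurable_pi_apply m))

lemma measurable_countFalse (m : ℕ) : Measurable fun b : ℕ → Bool => countFalse b m := by
  simp_rw [← Nat.sub_eq_of_eq_add' (countTrue_add_countFalse _ m).symm]
  exact measurable_const.sub (measurable_countTrue m)

lemma leftBP_eq_rightBP_neg (c : ℤ → ℕ → Bool) (z i : ℕ) :
    leftBP c z i = rightBP (fun x j => !c (-x) j) z i := by
  induction i with
  | zero => rfl
  | succ i ih => simp only [leftBP, rightBP, ih, countFalse_not, neg_add]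

namespace IntPath

section

variable (Y : ℕ → ℤ) (x : ℤ)

def visits (t : ℕ) : ℕ := #{k ∈ range t | Y k = x}

def rightSteps (t : ℕ) : ℕ := #{k ∈ Icc 1 t | Y (k - 1) = x ∧ Y k = x + 1}

def leftSteps (t : ℕ) : ℕ := #{k ∈ Icc 1 t | Y (k - 1) = x ∧ Y k = x - 1}

lemma visits_succ (t : ℕ) : visits Y x (t + 1) = visits Y x t + if Y t = x then 1 else 0 := by
  by_cases h : Y t = x <;> simp [visits, range_add_one, filter_insert, h]

lemma visits_eq_of_forall_ne {a b : ℕ} (hab : a ≤ b) (h : ∀ k, a ≤ k → k < b → Y k ≠ x) :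
    visits Y x b = visits Y x a := by
  induction b, hab using Nat.le_induction with
  | base => rfl
  | succ b hab ih =>
    rw [visits_succ, if_neg (h b hab b.lt_succ_self), add_zero,
      ih fun k hak hkb => h k hak (by omega)]

lemma rightSteps_succ (t : ℕ) :
    rightSteps Y x (t + 1) = rightSteps Y x t + if Y t = x ∧ Y (t + 1) = x + 1 then 1 else 0 := by
  by_cases h : Y t = x ∧ Y (t + 1) = x + 1 <;>
    simp [rightSteps, ← insert_Icc_right_eq_Icc_add_one, filter_insert, h]

lemma leftSteps_succ (t : ℕ) :
    leftSteps Y x (t + 1) = leftSteps Y x t + if Y t = x ∧ Y (t + 1) = x - 1 then 1 else 0 := by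
  by_cases h : Y t = x ∧ Y (t + 1) = x - 1 <;>
    simp [leftSteps, ← insert_Icc_right_eq_Icc_add_one, filter_insert, h]

lemma visits_neg (t : ℕ) : visits (fun k => -Y k) (-x) t = visits Y x t := by
  simp [visits]

lemma rightSteps_neg (t : ℕ) : rightSteps (fun k => -Y k) x t = leftSteps Y (-x) t := by
  simp only [rightSteps, leftSteps, neg_eq_iff_eq_neg, neg_add, sub_eq_add_neg]

end

def IsDrivenBy (Y : ℕ → ℤ) (c : ℤ → ℕ → Bool) : Prop :=
  ∀ k, Y (k + 1) = Y k + if c (Y k) (visits Y (Y k) k) then 1 else -1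

namespace IsDrivenBy

variable {Y : ℕ → ℤ} {c : ℤ → ℕ → Bool}

lemma step_eq_or (hY : IsDrivenBy Y c) (k : ℕ) : Y (k + 1) = Y k + 1 ∨ Y (k + 1) = Y k - 1 := by
  rw [hY k]; split_ifs <;> omega

lemma rightSteps_eq_countTrue (hY : IsDrivenBy Y c) (x : ℤ) (t : ℕ) :
    rightSteps Y x t = countTrue (c x) (visits Y x t) := by
  induction t with
  | zero => rfl
  | succ t ih =>
    rw [rightSteps_succ, visits_succ, ih]
    by_cases hx : Y t = x
    · have := hY t
      subst hx
      cases hc : c (Y t) (visits Y (Y t) t) <;> simp_all [countTrue_succ]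
    · simp [hx]

lemma leftSteps_eq_countFalse (hY : IsDrivenBy Y c) (x : ℤ) (t : ℕ) :
    leftSteps Y x t = countFalse (c x) (visits Y x t) := by
  induction t with
  | zero => rfl
  | succ t ih =>
    rw [leftSteps_succ, visits_succ, ih]
    by_cases hx : Y t = x
    · have := hY t
      subst hx
      cases hc : c (Y t) (visits Y (Y t) t) <;> simp_all [countFalse_succ] <;> omega
    · simp [hx]

/-- Every right step from `x ≥ 0` but the last is matched by a later left step from `x + 1`. -/
lemma rightSteps_eq_leftSteps_add (hY : IsDrivenBy Y c) (hY0 : Y 0 = 0) {x : ℤ} (hx : 0 ≤ x)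
    (t : ℕ) : rightSteps Y x t = leftSteps Y (x + 1) t + if x < Y t then 1 else 0 := by
  induction t with
  | zero => simp [rightSteps, leftSteps, hY0, hx]
  | succ t ih =>
    rw [rightSteps_succ, leftSteps_succ, ih, add_sub_cancel_right]
    rcases hY.step_eq_or t with h | h <;> split_ifs <;> omega

/-- The last departure from `x` of a walk that is now below `x` was a left step. -/
lemma coin_eq_false_of_lt (hY : IsDrivenBy Y c) {x : ℤ} {t k : ℕ} (ht : Y t < x)
    (hk : visits Y x t = k + 1) : c x k = false := by
  induction t with
  | zero => simp [visits] at hk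
  | succ t ih =>
    rw [visits_succ] at hk
    by_cases hx : Y t = x
    · have := hY t
      subst hx
      rw [if_pos rfl, Nat.add_right_cancel_iff] at hk
      subst hk
      cases hc : c (Y t) (visits Y (Y t) t) <;> simp_all
    · rcases hY.step_eq_or t with h | h <;> exact ih (by omega) (by simpa [hx] using hk)

lemma sInf_countFalse_leftSteps (hY : IsDrivenBy Y c) {x : ℤ} {t : ℕ} (ht : Y t < x) :
    sInf {m | countFalse (c x) m = leftSteps Y x t} = visits Y x t := by
  rw [hY.leftSteps_eq_countFalse]
  rcases h : visits Y x t with _ | k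
  · exact sInf_countFalse_eq_zero _
  · exact sInf_countFalse_eq_succ _ (hY.coin_eq_false_of_lt ht h)

lemma rightBP_rightSteps (hY : IsDrivenBy Y c) (hY0 : Y 0 = 0) {t : ℕ} (ht : Y t = 0) (i : ℕ) :
    rightBP c (rightSteps Y 0 t) i = rightSteps Y i t := by
  induction i with
  | zero => rfl
  | succ i ih =>
    have hbal := hY.rightSteps_eq_leftSteps_add hY0 (Int.natCast_nonneg i) t
    have hsum : rightSteps Y (i + 1) t + leftSteps Y (i + 1) t = visits Y (i + 1) t := by
      rw [hY.rightSteps_eq_countTrue, hY.leftSteps_eq_countFalse, countTrue_add_countFalse]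
    simp only [ht, Int.not_lt.2 (Int.natCast_nonneg i), if_false, add_zero] at hbal
    rw [rightBP, ih, hbal, hY.sInf_countFalse_leftSteps (by omega)]
    push_cast
    omega

lemma neg (hY : IsDrivenBy Y c) : IsDrivenBy (fun k => -Y k) (fun x j => !c (-x) j) := by
  intro k
  simp only [neg_neg, visits_neg, hY k]
  split_ifs <;> simp_all <;> omega

lemma leftBP_leftSteps (hY : IsDrivenBy Y c) (hY0 : Y 0 = 0) {t : ℕ} (ht : Y t = 0) (i : ℕ) :
    leftBP c (leftSteps Y 0 t) i = leftSteps Y (-i) t := by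
  have := hY.neg.rightBP_rightSteps (t := t) (by simp [hY0]) (by simp [ht]) i
  rwa [rightSteps_neg, rightSteps_neg, neg_zero, ← leftBP_eq_rightBP_neg] at this

end IsDrivenBy

end IntPath

lemma Nat.sInf_eq_iff {s : Set ℕ} {y : ℕ} :
    sInf s = y ↔ (y ∈ s ∧ ∀ z < y, z ∉ s) ∨ (y = 0 ∧ s = ∅) := by
  rcases s.eq_empty_or_nonempty with rfl | hs
  · simp [eq_comm]
  refine ⟨fun h => Or.inl (h ▸ ⟨Nat.sInf_mem hs, fun z => Nat.notMem_of_lt_sInf⟩), ?_⟩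
  rintro (⟨hy, hmin⟩ | ⟨-, rfl⟩)
  · exact le_antisymm (Nat.sInf_le hy) (le_csInf hs fun m hm => not_lt.1 fun h => hmin m h hm)
  · simp at hs

lemma ENat.sInf_setOf_natCast_eq_coe {P : ℕ → Prop} {t : ℕ}
    (h : sInf {τ : ℕ∞ | ∃ j : ℕ, τ = j ∧ P j} = t) : P t ∧ ∀ j < t, ¬P j := by
  have hset : {τ : ℕ∞ | ∃ j : ℕ, τ = j ∧ P j} = (↑) '' {j | P j} := by
    ext τ; simp [eq_comm, and_comm]
  rw [hset, sInf_image] at h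
  by_cases hex : ∃ j, P j
  · rw [← ENat.natCast_sInf (s := {j | P j}) hex, Nat.cast_inj] at h
    subst h
    exact ⟨Nat.sInf_mem hex, fun j hj => Nat.notMem_of_lt_sInf hj⟩
  · simp [not_exists.1 hex] at h

lemma measurable_sInf_setOf {α : Type*} [MeasurableSpace α] {F : α → ℕ → Prop}
    (hF : ∀ m, MeasurableSet {a | F a m}) : Measurable fun a => sInf {m | F a m} := by
  refine measurable_to_nat fun a => ?_
  simp only [Set.preimage, Set.mem_singleton_iff, Nat.sInf_eq_iff, Set.eq_empty_iff_forall_notMem,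
    Set.mem_ofPred_eq]
  measurability

section BranchingMeasurability

variable {α : Type*} {mα : MeasurableSpace α} {b : α → ℤ → ℕ → Bool}

lemma measurable_rightBP (hb : ∀ x : ℤ, 0 < x → Measurable fun a => b a x) (w i : ℕ) :
    Measurable fun a => rightBP (b a) w i := by
  induction i with
  | zero => exact measurable_const
  | succ i ih =>
    refine Measurable.sub (measurable_sInf_setOf fun m => measurableSet_eq_fun ?_ ih) ih
    exact (measurable_countFalse m).comp (hb _ (by omega))

lemma measurable_leftBP (hb : ∀ x : ℤ, x < 0 → Measurable fun a => b a x) (z i : ℕ) :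
    Measurable fun a => leftBP (b a) z i := by
  simp_rw [leftBP_eq_rightBP_neg]
  refine measurable_rightBP (fun x hx => ?_) z i
  exact measurable_pi_lambda _ fun j =>
    (measurable_of_countable not).comp ((measurable_pi_apply j).comp (hb (-x) (by omega)))

end BranchingMeasurability

section PointCylinders

variable (ι β : Type*)

def pointCylinders : Set (Set (ι → β)) :=
  {E | ∃ (J : Finset ι) (v : ι → β), E = {g | ∀ j ∈ J, g j = v j}}

variable {ι β}

lemma isPiSystem_pointCylinders : IsPiSystem (pointCylinders ι β) := by
  classical
  rintro _ ⟨J₁, v₁, rfl⟩ _ ⟨J₂, v₂, rfl⟩ ⟨g₀, hg₁, hg₂⟩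
  refine ⟨J₁ ∪ J₂, g₀, Set.ext fun g => ⟨fun ⟨h₁, h₂⟩ j hj => ?_, fun h => ⟨?_, ?_⟩⟩⟩
  · rcases mem_union.1 hj with hj | hj
    · rw [h₁ j hj, hg₁ j hj]
    · rw [h₂ j hj, hg₂ j hj]
  · exact fun j hj => (h j (mem_union_left _ hj)).trans (hg₁ j hj)
  · exact fun j hj => (h j (mem_union_right _ hj)).trans (hg₂ j hj)

lemma generateFrom_pointCylinders [MeasurableSpace β] [Countable β] [MeasurableSingletonClass β] :
    MeasurableSpace.generateFrom (pointCylinders ι β) = MeasurableSpace.pi := by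
  refine le_antisymm (MeasurableSpace.generateFrom_le ?_) ?_
  · rintro _ ⟨J, v, rfl⟩
    simp_rw [Set.ofPred_forall]
    exact J.measurableSet_biInter fun j _ => measurableSet_eq_fun (measurable_pi_apply j)
      measurable_const
  · refine iSup_le fun j => Measurable.comap_le (m₁ := MeasurableSpace.generateFrom _)
      (@measurable_to_countable' β (ι → β) _ _ (.generateFrom _) (fun g => g j) fun b => ?_)
    exact MeasurableSpace.measurableSet_generateFrom ⟨{j}, fun _ => b, by ext; simp⟩

end PointCylinders

namespace ProbabilityTheory

lemma iIndepFun.integral_finset_prod_comp {Ω ι 𝓧 : Type*} [MeasurableSpace Ω]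
    {μ : Measure Ω} [MeasurableSpace 𝓧] {f : ι → Ω → 𝓧} (hf : iIndepFun f μ)
    (hfm : ∀ i, Measurable (f i)) {g : ι → 𝓧 → ℝ} (hg : ∀ i, Measurable (g i)) (T : Finset ι) :
    ∫ ω, ∏ i ∈ T, g i (f i ω) ∂μ = ∏ i ∈ T, ∫ ω, g i (f i ω) ∂μ := by
  have := (hf.precomp (Subtype.val_injective (p := (· ∈ T)))).integral_fun_prod_comp
    (X := fun i : T => f i) (f := fun i => g i) (fun i => (hfm i).aemeasurable)
    fun i => (hg i).aestronglyMeasurable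
  rwa [prod_coe_sort T fun i => ∫ ω, g i (f i ω) ∂μ,
    integral_congr_ae (ae_of_all _ fun ω => prod_coe_sort T fun i => g i (f i ω))] at this

section DisjointBlocks

variable {Ω ι : Type*} {mΩ : MeasurableSpace Ω} {μ : Measure Ω}
  {m : ι → MeasurableSpace Ω} {I J K : Set ι} {E F G : Set Ω}

lemma iIndep.measure_inter_inter_of_disjoint (h : iIndep m μ) (hle : ∀ i, m i ≤ mΩ)
    (hIJ : Disjoint I J) (hIK : Disjoint I K) (hJK : Disjoint J K)
    (hE : MeasurableSet[⨆ i ∈ I, m i] E) (hF : MeasurableSet[⨆ i ∈ J, m i] F)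
    (hG : MeasurableSet[⨆ i ∈ K, m i] G) :
    μ (E ∩ F ∩ G) = μ E * μ F * μ G := by
  have hFG : MeasurableSet[⨆ i ∈ J ∪ K, m i] (F ∩ G) :=
    MeasurableSet.inter (MeasurableSpace.le_def.1 (biSup_mono fun _ => Or.inl) _ hF)
      (MeasurableSpace.le_def.1 (biSup_mono fun _ => Or.inr) _ hG)
  rw [Set.inter_assoc, mul_assoc,
    (Indep_iff _ _ _).1 (indep_iSup_of_disjoint hle h (Set.disjoint_union_right.2 ⟨hIJ, hIK⟩))
      _ _ hE hFG,
    (Indep_iff _ _ _).1 (indep_iSup_of_disjoint hle h hJK) _ _ hF hG]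

/-- The product form of the conditional independence of `E` and `F` given `G`. -/
lemma iIndep.measure_inter_inter_mul_eq [IsProbabilityMeasure μ] (h : iIndep m μ)
    (hle : ∀ i, m i ≤ mΩ) (hIJ : Disjoint I J) (hIK : Disjoint I K) (hJK : Disjoint J K)
    (hE : MeasurableSet[⨆ i ∈ I, m i] E) (hF : MeasurableSet[⨆ i ∈ J, m i] F)
    (hG : MeasurableSet[⨆ i ∈ K, m i] G) :
    μ (E ∩ F ∩ G) * μ G = μ (E ∩ G) * μ (F ∩ G) := by
  have hEG := h.measure_inter_inter_of_disjoint hle hIJ hIK hJK hE .univ hG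
  have hFG := h.measure_inter_inter_of_disjoint hle hIJ hIK hJK .univ hF hG
  rw [Set.inter_univ] at hEG
  rw [Set.univ_inter] at hFG
  rw [h.measure_inter_inter_of_disjoint hle hIJ hIK hJK hE hF hG, hEG, hFG, measure_univ]
  ring

end DisjointBlocks

end ProbabilityTheory

namespace ERWSetup

variable (S : ERWSetup)

attribute [local instance] ERWSetup.isProb

lemma isDrivenBy (ω : S.Ω) : IntPath.IsDrivenBy (S.X · ω) (S.B ω) := by
  intro k
  have h := S.X_step ω k
  change _ = _ + ite (S.B ω _ (IntPath.visits (S.X · ω) (S.X k ω) (k + 1) - 1) = true) _ _ at h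
  rwa [IntPath.visits_succ, if_pos rfl, Nat.add_sub_cancel] at h

lemma X_eq_zero_and_visits_of_ret_eq (ω : S.Ω) :
    ∀ (k t : ℕ), S.ret k ω = t → S.X t ω = 0 ∧ IntPath.visits (S.X · ω) 0 t = k
  | 0, t, h => by
    have h0 : (t : ℕ∞) = 0 := h.symm
    obtain rfl : t = 0 := by exact_mod_cast h0
    exact ⟨S.X_zero ω, rfl⟩
  | k + 1, t, h => by
    obtain ⟨⟨hlt, hXt⟩, hmin⟩ := ENat.sInf_setOf_natCast_eq_coe h
    obtain ⟨s, hs⟩ : ∃ s : ℕ, S.ret k ω = s :=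
      (ENat.ne_top_iff_exists.1 (ne_top_of_lt hlt)).imp fun _ => Eq.symm
    obtain ⟨hXs, hvs⟩ := X_eq_zero_and_visits_of_ret_eq ω k s hs
    rw [hs, Nat.cast_lt] at hlt
    refine ⟨hXt, ?_⟩
    rw [IntPath.visits_eq_of_forall_ne _ _ hlt fun j hsj hjt hXj =>
      hmin j hjt ⟨by rw [hs]; exact_mod_cast hsj, hXj⟩, IntPath.visits_succ, hvs, if_pos hXs]

lemma rightBP_eq_U_and_leftBP_eq_D {n : ℕ} {ω : S.Ω} (hn : S.ret n ω < ⊤) (i : ℕ) :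
    rightBP (S.B ω) (S.R n ω) i = S.U i (S.ret n ω).toNat ω ∧
      leftBP (S.B ω) (n - S.R n ω) i = S.D (-i) (S.ret n ω).toNat ω := by
  have hY := S.isDrivenBy ω
  obtain ⟨hXN, hvisits⟩ :=
    S.X_eq_zero_and_visits_of_ret_eq ω n _ (ENat.natCast_toNat hn.ne).symm
  have hR : S.R n ω = IntPath.rightSteps (S.X · ω) 0 (S.ret n ω).toNat := by
    rw [hY.rightSteps_eq_countTrue, hvisits, R]
  have hL : n - S.R n ω = IntPath.leftSteps (S.X · ω) 0 (S.ret n ω).toNat := by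
    rw [hY.leftSteps_eq_countFalse, hvisits, R]
    have := countTrue_add_countFalse (S.B ω 0) n
    omega
  exact ⟨hR ▸ hY.rightBP_rightSteps (S.X_zero ω) hXN i,
    hL ▸ hY.leftBP_leftSteps (S.X_zero ω) hXN i⟩

lemma measurable_B_apply (x : ℤ) : Measurable fun ω => S.B ω x :=
  (measurable_pi_apply x).comp S.meas_B

lemma measurableSet_cylinder (s : Finset (ℤ × ℕ)) (v : ℤ × ℕ → Bool) :
    MeasurableSet {ω | ∀ p ∈ s, S.B ω p.1 p.2 = v p} := by
  simp_rw [Set.ofPred_forall]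
  exact s.measurableSet_biInter fun p _ => measurableSet_eq_fun
    ((measurable_pi_apply p.2).comp (S.measurable_B_apply p.1)) measurable_const

lemma measureReal_cylinder (s : Finset (ℤ × ℕ)) (v : ℤ × ℕ → Bool) :
    S.μ.real {ω | ∀ p ∈ s, S.B ω p.1 p.2 = v p} =
      ∫ ω, ∏ p ∈ s, (if v p then S.cookie ω p.1 p.2 else 1 - S.cookie ω p.1 p.2) ∂S.μ :=
  calc S.μ.real {ω | ∀ p ∈ s, S.B ω p.1 p.2 = v p}
    _ = ∫ ω, if ∀ p ∈ s, S.B ω p.1 p.2 = v p then (1 : ℝ) else 0 ∂S.μ := by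
      rw [← integral_indicator_one (S.measurableSet_cylinder s v)]
      congr with ω
      rw [Set.indicator_apply, Pi.one_apply]
      congr
    _ = ∫ ω, S.μ[fun ω => if ∀ p ∈ s, S.B ω p.1 p.2 = v p then (1 : ℝ) else 0 |
          MeasurableSpace.comap S.cookie inferInstance] ω ∂S.μ :=
      (integral_condExp S.meas_cookie.comap_le).symm
    _ = _ := integral_congr_ae (S.condB s v)

lemma measureReal_iInter_siteCylinders (T : Finset ℤ) (J : ℤ → Finset ℕ) (v : ℤ → ℕ → Bool) :
    S.μ.real (⋂ x ∈ T, {ω | ∀ j ∈ J x, S.B ω x j = v x j}) =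
      ∫ ω, ∏ x ∈ T, ∏ j ∈ J x, (if v x j then S.cookie ω x j else 1 - S.cookie ω x j) ∂S.μ := by
  let s := (T.sigma J).map (Equiv.sigmaEquivProd ℤ ℕ).toEmbedding
  have hs : (⋂ x ∈ T, {ω | ∀ j ∈ J x, S.B ω x j = v x j}) =
      {ω | ∀ p ∈ s, S.B ω p.1 p.2 = v p.1 p.2} := by
    ext ω
    simp only [s, Set.mem_iInter, Set.mem_ofPred_eq, mem_map_equiv,
      Equiv.sigmaEquivProd_symm_apply, mem_sigma, and_imp, Prod.forall]
    exact ⟨fun h a b ha hb => h a ha b hb, fun h a ha b hb => h a b ha hb⟩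
  rw [hs, measureReal_cylinder]
  simp only [s, prod_map, prod_sigma]
  rfl

/-- The `B`s are conditionally independent given the environment, which is independent across
sites. -/
lemma measure_iInter_siteCylinders (T : Finset ℤ) (J : ℤ → Finset ℕ) (v : ℤ → ℕ → Bool) :
    S.μ (⋂ x ∈ T, {ω | ∀ j ∈ J x, S.B ω x j = v x j}) =
      ∏ x ∈ T, S.μ {ω | ∀ j ∈ J x, S.B ω x j = v x j} := by
  have hsite (x : ℤ) : S.μ.real {ω | ∀ j ∈ J x, S.B ω x j = v x j} =
      ∫ ω, ∏ j ∈ J x, (if v x j then S.cookie ω x j else 1 - S.cookie ω x j) ∂S.μ := by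
    simpa using S.measureReal_iInter_siteCylinders {x} J v
  have hweight (x : ℤ) :
      Measurable fun h : ℕ → ℝ => ∏ j ∈ J x, if v x j then h j else 1 - h j :=
    measurable_prod _ fun j _ => Measurable.ite (.const _) (measurable_pi_apply j)
      (measurable_const.sub (measurable_pi_apply j))
  have hreal : S.μ.real (⋂ x ∈ T, {ω | ∀ j ∈ J x, S.B ω x j = v x j}) =
      ∏ x ∈ T, S.μ.real {ω | ∀ j ∈ J x, S.B ω x j = v x j} := by
    rw [measureReal_iInter_siteCylinders, S.A2_indep.integral_finset_prod_comp
      (fun x => (measurable_pi_apply x).comp S.meas_cookie) hweight]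
    simp_rw [hsite]
  simp only [measureReal_def, ← ENNReal.toReal_prod] at hreal
  exact (ENNReal.toReal_eq_toReal_iff' (measure_ne_top _ _)
    (ENNReal.prod_ne_top fun _ _ => measure_ne_top _ _)).1 hreal

lemma iIndepFun_B : iIndepFun (fun x ω => S.B ω x) S.μ := by
  rw [iIndepFun_iff_iIndep]
  refine iIndepSets.iIndep (fun x => (S.measurable_B_apply x).comap_le)
    (fun x => Set.preimage (fun ω => S.B ω x) '' pointCylinders ℕ Bool)
    (fun x => isPiSystem_pointCylinders.comap _)
    (fun x => by rw [← generateFrom_pointCylinders, MeasurableSpace.comap_generateFrom]) ?_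
  refine (iIndepSets_iff _ _).2 fun T f hf => ?_
  have hcyl (x : ℤ) : ∃ (J : Finset ℕ) (v : ℕ → Bool),
      x ∈ T → f x = {ω | ∀ j ∈ J, S.B ω x j = v j} := by
    by_cases hx : x ∈ T
    · obtain ⟨_, ⟨J, v, rfl⟩, hfx⟩ := hf x hx
      exact ⟨J, v, fun _ => hfx.symm⟩
    · exact ⟨∅, fun _ => true, fun h => absurd h hx⟩
  choose J v hJ using hcyl
  rw [Set.iInter₂_congr fun x hx => hJ x hx, prod_congr rfl fun x hx => congrArg S.μ (hJ x hx)]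
  exact S.measure_iInter_siteCylinders T J v

abbrev coinAlg (I : Set ℤ) : MeasurableSpace S.Ω :=
  ⨆ x ∈ I, MeasurableSpace.comap (fun ω => S.B ω x) inferInstance

lemma measurable_B_coinAlg {I : Set ℤ} {x : ℤ} (hx : x ∈ I) :
    Measurable[S.coinAlg I] fun ω => S.B ω x :=
  (comap_measurable _).mono (le_biSup (fun x => MeasurableSpace.comap (fun ω => S.B ω x) _) hx)
    le_rfl

lemma measurableSet_rightBP_mem (w : ℕ) {A : Set (ℕ → ℕ)} (hA : MeasurableSet A) :
    MeasurableSet[S.coinAlg (Set.Ioi 0)] {ω | (fun i => rightBP (S.B ω) w (i + 1)) ∈ A} :=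
  (@measurable_pi_lambda _ _ _ (S.coinAlg (Set.Ioi 0)) _ _ fun i =>
    measurable_rightBP (b := S.B) (fun _ hx => S.measurable_B_coinAlg hx) w (i + 1)) hA

lemma measurableSet_leftBP_mem (z : ℕ) {A : Set (ℕ → ℕ)} (hA : MeasurableSet A) :
    MeasurableSet[S.coinAlg (Set.Iio 0)] {ω | (fun i => leftBP (S.B ω) z (i + 1)) ∈ A} :=
  (@measurable_pi_lambda _ _ _ (S.coinAlg (Set.Iio 0)) _ _ fun i =>
    measurable_leftBP (b := S.B) (fun _ hx => S.measurable_B_coinAlg hx) z (i + 1)) hA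

lemma measurableSet_R_eq (n m : ℕ) : MeasurableSet[S.coinAlg {0}] {ω | S.R n ω = m} :=
  measurableSet_eq_fun ((measurable_countTrue n).comp (S.measurable_B_coinAlg rfl))
    measurable_const

lemma measure_inter_inter_R_mul_eq (n m z : ℕ) {A A' : Set (ℕ → ℕ)} (hA : MeasurableSet A)
    (hA' : MeasurableSet A') :
    S.μ ({ω | (fun i => rightBP (S.B ω) m (i + 1)) ∈ A} ∩
          {ω | (fun i => leftBP (S.B ω) z (i + 1)) ∈ A'} ∩ {ω | S.R n ω = m}) *
        S.μ {ω | S.R n ω = m} =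
      S.μ ({ω | (fun i => rightBP (S.B ω) m (i + 1)) ∈ A} ∩ {ω | S.R n ω = m}) *
        S.μ ({ω | (fun i => leftBP (S.B ω) z (i + 1)) ∈ A'} ∩ {ω | S.R n ω = m}) :=
  ((iIndepFun_iff_iIndep _ _ _).1 S.iIndepFun_B).measure_inter_inter_mul_eq
    (fun x => (S.measurable_B_apply x).comap_le) Set.Ioi_disjoint_Iio_same (by simp) (by simp)
    (S.measurableSet_rightBP_mem m hA) (S.measurableSet_leftBP_mem z hA')
    (S.measurableSet_R_eq n m)

end ERWSetup

theorem forward_bp_correspondence_general (S : ERWSetup) (n : ℕ) :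
    (∀ᵐ ω ∂S.μ, S.ret n ω < ⊤ →
      ∀ i : ℕ, rightBP (S.B ω) (S.R n ω) i = S.U (i : ℤ) (S.ret n ω).toNat ω ∧
        leftBP (S.B ω) (n - S.R n ω) i = S.D (-(i : ℤ)) (S.ret n ω).toNat ω) ∧
    (∀ m : ℕ, ∀ A A' : Set (ℕ → ℕ), MeasurableSet A → MeasurableSet A' →
      S.μ {ω | (fun i => rightBP (S.B ω) (S.R n ω) (i + 1)) ∈ A ∧
            (fun i => leftBP (S.B ω) (n - S.R n ω) (i + 1)) ∈ A' ∧ S.R n ω = m} *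
          S.μ {ω | S.R n ω = m}
        = S.μ {ω | (fun i => rightBP (S.B ω) (S.R n ω) (i + 1)) ∈ A ∧ S.R n ω = m} *
          S.μ {ω | (fun i => leftBP (S.B ω) (n - S.R n ω) (i + 1)) ∈ A' ∧ S.R n ω = m}) := by
  refine ⟨ae_of_all _ fun ω hω i => S.rightBP_eq_U_and_leftBP_eq_D hω i, fun m A A' hA hA' => ?_⟩
  convert S.measure_inter_inter_R_mul_eq n m (n - m) hA hA' using 3 <;> ext ω <;>
    constructor <;> aesop

/-- **Lemma 2.2 (correspondence between the walk and the forward branching processes).**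
With the random initial conditions `W_0 = R_n` and `Z_0 = n - R_n`, on the event
`{ρ_n < ∞}` one has `W_i = U_i^{ρ_n}` and `Z_i = D_{-i}^{ρ_n}` for all `i ≥ 0`; moreover
`(W_i)_{i ≥ 1}` and `(Z_i)_{i ≥ 1}` are conditionally independent given `(W_0, Z_0)`
(equivalently, given the discrete random variable `R_n`, since `W_0 = R_n`, `Z_0 = n - R_n`). -/
theorem forward_bp_correspondence (S : ERWSetup) (n : ℕ) (hn : 1 ≤ n) :
    (∀ᵐ ω ∂S.μ, S.ret n ω < ⊤ →
      ∀ i : ℕ, rightBP (S.B ω) (S.R n ω) i = S.U (i : ℤ) (S.ret n ω).toNat ω ∧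
        leftBP (S.B ω) (n - S.R n ω) i = S.D (-(i : ℤ)) (S.ret n ω).toNat ω) ∧
    (∀ m : ℕ, ∀ A A' : Set (ℕ → ℕ), MeasurableSet A → MeasurableSet A' →
      S.μ {ω | (fun i => rightBP (S.B ω) (S.R n ω) (i + 1)) ∈ A ∧
            (fun i => leftBP (S.B ω) (n - S.R n ω) (i + 1)) ∈ A' ∧ S.R n ω = m} *
          S.μ {ω | S.R n ω = m}
        = S.μ {ω | (fun i => rightBP (S.B ω) (S.R n ω) (i + 1)) ∈ A ∧ S.R n ω = m} *
          S.μ {ω | (fun i => leftBP (S.B ω) (n - S.R n ω) (i + 1)) ∈ A' ∧ S.R n ω = m}) :=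
  forward_bp_correspondence_general S n
end
end

section
/- Let ξ₁, ξ₂, ξ₃, … be i.i.d. non-negative random variables with P(ξ₁ > t) ~ C₀·t^{−α} as t → ∞ for some C₀ > 0 and α > 0. If 0 < γ < min(α, 1), then for any x > 0, P(Σ_{i=1}^{⌊n^γ⌋} ξ_i > x·n) ~ C₀·x^{−α}·n^{γ−α} as n → ∞. -/
open Filter Finset
open scoped ENNReal NNReal

noncomputable section

open MeasureTheory ProbabilityTheory

open MeasureTheory ProbabilityTheory

/-
Write `M = ⌊n^γ⌋`, `p(t) = P(ξ > t)` and `G_n = C₀ x^{-α} n^{γ-α}`; then `M p(xn) ~ G_n → 0`.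

Lower bound: the sum exceeds `xn` as soon as one summand does, so by independence
`P(S > xn) ≥ 1 - (1 - p(xn))^M ≥ M p(xn) - (M p(xn))²`.

Upper bound (one big jump): if `S > xn`, then either some summand exceeds `(1-ε)xn`, or two
summands exceed `δxn`, or the summands truncated at `δxn` still add up to more than `εxn`.
The first event has probability at most `M p((1-ε)xn) ~ (1-ε)^{-α} G_n`, the second at most
`(M p(δxn))² = O(n^{2(γ-α)}) = o(G_n)`. For the third, the tail bound `p(s) = O(s^{-β})` with
`γ < β < min(α, 1)` gives `E[min(ξ, t)] = O(t^{1-β})`, and a Chernoff bound with parameter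
`α log n / (εxn)` makes it `O(n^{-α}) = o(G_n)` once `δ` is small. Finally let `ε → 0`.
-/

open Real Topology

lemma mul_sub_sq_le_one_sub_one_sub_pow {p : ℝ} (hp0 : 0 ≤ p) (hp1 : p ≤ 1) (m : ℕ) :
    m * p - (m * p) ^ 2 ≤ 1 - (1 - p) ^ m := by
  induction m with
  | zero => simp
  | succ m ih =>
    have hbernoulli : 1 - m * p ≤ (1 - p) ^ m := by
      simpa [sub_eq_add_neg, mul_comm] using one_add_mul_le_pow (a := -p) (by linarith) m
    rw [pow_succ (1 - p)]
    push_cast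
    nlinarith [mul_le_mul_of_nonneg_left hbernoulli hp0, sq_nonneg ((m : ℝ) * p),
      mul_nonneg (Nat.cast_nonneg m : (0 : ℝ) ≤ m) hp0]

lemma Real.exp_le_one_add_mul_exp {y Y : ℝ} (hy : 0 ≤ y) (hyY : y ≤ Y) :
    exp y ≤ 1 + y * exp Y := by
  have h : (1 - y) * exp y ≤ 1 := by
    simpa [← exp_add] using
      mul_le_mul_of_nonneg_right (by linarith [add_one_le_exp (-y)] : 1 - y ≤ exp (-y))
        (exp_pos y).le
  nlinarith [mul_le_mul_of_nonneg_left (exp_le_exp.2 hyY) hy]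

lemma lt_sum_min_of_lt_sum {ι : Type*} [DecidableEq ι] {s : Finset ι} {v : ι → ℝ}
    (hv : ∀ i ∈ s, 0 ≤ v i) {x ε τ : ℝ} (hε : ε ≤ 1) (hx : 0 ≤ x) (hτ : 0 ≤ τ)
    (hbig : ∀ i ∈ s, v i ≤ (1 - ε) * x)
    (hpair : ∀ i ∈ s, ∀ j ∈ s, i ≠ j → v i ≤ τ ∨ v j ≤ τ) (hsum : x < ∑ i ∈ s, v i) :
    ε * x < ∑ i ∈ s, min (v i) τ := by
  by_cases hex : ∃ i₀ ∈ s, τ < v i₀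
  · obtain ⟨i₀, hi₀, hτi₀⟩ := hex
    have hrest : ∑ j ∈ s.erase i₀, v j = ∑ j ∈ s.erase i₀, min (v j) τ :=
      sum_congr rfl fun j hj => (min_eq_left ((hpair j (mem_of_mem_erase hj) i₀ hi₀
        (ne_of_mem_erase hj)).resolve_right hτi₀.not_ge)).symm
    calc ε * x < ∑ j ∈ s.erase i₀, v j := by linarith [add_sum_erase s v hi₀, hbig i₀ hi₀]
      _ = ∑ j ∈ s.erase i₀, min (v j) τ := hrest
      _ ≤ ∑ i ∈ s, min (v i) τ :=
        sum_le_sum_of_subset_of_nonneg (erase_subset _ _) fun i hi _ => le_min (hv i hi) hτ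
  · simp only [not_exists, not_and, not_lt] at hex
    rw [sum_congr rfl fun i hi => min_eq_left (hex i hi)]
    nlinarith

lemma tendsto_of_le_of_forall_eventually_le {ι κ α : Type*} [LinearOrder α] [TopologicalSpace α]
    [OrderTopology α] {l : Filter ι} {F : Filter κ} [F.NeBot] {r ℓ : ι → α} {g : κ → α} {L : α}
    (hℓ : Tendsto ℓ l (𝓝 L)) (hℓr : ∀ᶠ n in l, ℓ n ≤ r n) (hg : Tendsto g F (𝓝 L))
    (hu : ∀ᶠ ε in F, ∃ u : ι → α, Tendsto u l (𝓝 (g ε)) ∧ ∀ᶠ n in l, r n ≤ u n) :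
    Tendsto r l (𝓝 L) := by
  refine tendsto_order.2 ⟨fun c hc => ?_, fun c hc => ?_⟩
  · filter_upwards [hℓ.eventually (lt_mem_nhds hc), hℓr] with n h1 h2 using h1.trans_le h2
  · obtain ⟨ε, hgε, u, hu, hru⟩ := ((hg.eventually (gt_mem_nhds hc)).and hu).exists
    filter_upwards [hu.eventually (gt_mem_nhds hgε), hru] with n h1 h2 using h2.trans_lt h1

section RegularlyVaryingTail

variable {p : ℝ → ℝ} {C₀ α γ x : ℝ}

lemma exists_le_mul_rpow_neg_of_tendsto (hp : Tendsto (fun t => p t / (C₀ * t ^ (-α))) atTop (𝓝 1))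
    (hC₀ : 0 < C₀) (hp1 : ∀ t, p t ≤ 1) {β : ℝ} (hβ0 : 0 ≤ β) (hβα : β ≤ α) :
    ∃ K, ∀ s > 0, p s ≤ K * s ^ (-β) := by
  obtain ⟨s₀, hs₀⟩ :=
    eventually_atTop.1 ((hp.eventually_le_const one_lt_two).and (eventually_ge_atTop 1))
  refine ⟨2 * C₀ + max s₀ 1 ^ β, fun s hs => ?_⟩
  rcases le_or_gt (max s₀ 1) s with hss | hss
  · obtain ⟨hratio, hs1⟩ := hs₀ s (le_of_max_le_left hss)
    calc p s ≤ 2 * (C₀ * s ^ (-α)) := (div_le_iff₀ (by positivity)).1 hratio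
      _ ≤ 2 * C₀ * s ^ (-β) := by
          rw [← mul_assoc]
          gcongr
      _ ≤ _ := by gcongr; exact le_add_of_nonneg_right (by positivity)
  · calc p s ≤ 1 := hp1 s
      _ ≤ max s₀ 1 ^ β * s ^ (-β) := by
          rw [rpow_neg hs.le, ← div_eq_mul_inv, one_le_div (by positivity)]
          exact rpow_le_rpow hs.le hss.le hβ0
      _ ≤ _ := by gcongr; exact le_add_of_nonneg_left (by positivity)

lemma tendsto_floor_rpow_mul_div (hp : Tendsto (fun t => p t / (C₀ * t ^ (-α))) atTop (𝓝 1))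
    (hC₀ : C₀ ≠ 0) (hγ : 0 < γ) (hx : 0 < x) {c : ℝ} (hc : 0 < c) :
    Tendsto (fun n : ℕ => ⌊(n : ℝ) ^ γ⌋₊ * p (c * (x * n)) / (C₀ * x ^ (-α) * (n : ℝ) ^ (γ - α)))
      atTop (𝓝 (c ^ (-α))) := by
  have hfloor : Tendsto (fun n : ℕ => (⌊(n : ℝ) ^ γ⌋₊ : ℝ) / (n : ℝ) ^ γ) atTop (𝓝 1) :=
    tendsto_nat_floor_div_atTop.comp ((tendsto_rpow_atTop hγ).comp tendsto_natCast_atTop_atTop)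
  have hscale : Tendsto (fun n : ℕ => c * (x * n)) atTop atTop :=
    (tendsto_natCast_atTop_atTop.const_mul_atTop hx).const_mul_atTop hc
  have := ((hfloor.mul (hp.comp hscale)).mul_const (c ^ (-α)))
  rw [one_mul, one_mul] at this
  refine this.congr' ?_
  filter_upwards [eventually_gt_atTop 0] with n hn
  have hn : (0 : ℝ) < n := by exact_mod_cast hn
  simp only [Function.comp_apply]
  rw [mul_rpow hc.le (by positivity), mul_rpow hx.le hn.le, rpow_sub hn, rpow_neg hn.le]
  field_simp

lemma tendsto_mul_natCast_rpow_sub_of_lt (hγα : γ < α) (A : ℝ) :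
    Tendsto (fun n : ℕ => A * (n : ℝ) ^ (γ - α)) atTop (𝓝 0) := by
  simpa [neg_sub] using ((tendsto_rpow_neg_atTop (sub_pos.2 hγα)).comp
    tendsto_natCast_atTop_atTop).const_mul A

lemma tendsto_floor_rpow_mul_sub_sq_div (hp : Tendsto (fun t => p t / (C₀ * t ^ (-α))) atTop (𝓝 1))
    (hC₀ : C₀ ≠ 0) (hγ : 0 < γ) (hγα : γ < α) (hx : 0 < x) :
    Tendsto (fun n : ℕ => (⌊(n : ℝ) ^ γ⌋₊ * p (x * n) - (⌊(n : ℝ) ^ γ⌋₊ * p (x * n)) ^ 2) /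
      (C₀ * x ^ (-α) * (n : ℝ) ^ (γ - α))) atTop (𝓝 1) := by
  have hq := tendsto_floor_rpow_mul_div hp hC₀ hγ hx one_pos
  simp only [one_mul, one_rpow] at hq
  have := hq.sub (hq.pow 2 |>.mul (tendsto_mul_natCast_rpow_sub_of_lt hγα (C₀ * x ^ (-α))))
  rw [one_pow, one_mul, sub_zero] at this
  refine this.congr' ?_
  filter_upwards [eventually_gt_atTop 0] with n hn
  have hG : C₀ * x ^ (-α) * (n : ℝ) ^ (γ - α) ≠ 0 := by
    have : (0 : ℝ) < n := by exact_mod_cast hn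
    positivity
  field_simp

lemma tendsto_floor_rpow_mul_add_sq_add_rpow_div
    (hp : Tendsto (fun t => p t / (C₀ * t ^ (-α))) atTop (𝓝 1))
    (hC₀ : C₀ ≠ 0) (hγ : 0 < γ) (hγα : γ < α) (hx : 0 < x) {c d : ℝ} (hc : 0 < c) (hd : 0 < d)
    (A : ℝ) :
    Tendsto (fun n : ℕ => (⌊(n : ℝ) ^ γ⌋₊ * p (c * (x * n)) +
        (⌊(n : ℝ) ^ γ⌋₊ * p (d * (x * n))) ^ 2 + A * (n : ℝ) ^ (-α)) /
      (C₀ * x ^ (-α) * (n : ℝ) ^ (γ - α))) atTop (𝓝 (c ^ (-α))) := by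
  have hnγ : Tendsto (fun n : ℕ => A / (C₀ * x ^ (-α)) * (n : ℝ) ^ (-γ)) atTop (𝓝 0) := by
    simpa using ((tendsto_rpow_neg_atTop hγ).comp tendsto_natCast_atTop_atTop).const_mul
      (A / (C₀ * x ^ (-α)))
  have := ((tendsto_floor_rpow_mul_div hp hC₀ hγ hx hc).add
    ((tendsto_floor_rpow_mul_div hp hC₀ hγ hx hd).pow 2 |>.mul
      (tendsto_mul_natCast_rpow_sub_of_lt hγα (C₀ * x ^ (-α))))).add hnγ
  rw [mul_zero, add_zero, add_zero] at this
  refine this.congr' ?_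
  filter_upwards [eventually_gt_atTop 0] with n hn
  have hn : (0 : ℝ) < n := by exact_mod_cast hn
  rw [rpow_sub hn, rpow_neg hn.le, rpow_neg hn.le, rpow_neg hx.le]
  field_simp

end RegularlyVaryingTail

section IID

variable {Ω : Type*} [MeasurableSpace Ω] {μ : Measure Ω} {ξ : ℕ → Ω → ℝ}

lemma mgf_le_one_add_mul_exp_mul_integral [IsProbabilityMeasure μ] {Y : Ω → ℝ}
    (hY : Measurable Y) {t l : ℝ} (hY0 : ∀ ω, 0 ≤ Y ω) (hYt : ∀ ω, Y ω ≤ t) (hl : 0 ≤ l) :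
    mgf Y μ l ≤ 1 + l * exp (l * t) * μ[Y] := by
  have hYint : Integrable Y μ :=
    .of_bound hY.aestronglyMeasurable t
      (.of_forall fun ω => by rw [norm_of_nonneg (hY0 ω)]; exact hYt ω)
  calc mgf Y μ l ≤ ∫ ω, (1 + l * exp (l * t) * Y ω) ∂μ := by
        refine integral_mono_of_nonneg (.of_forall fun ω => (exp_pos _).le)
          ((integrable_const 1).add (hYint.const_mul _)) (.of_forall fun ω => ?_)
        calc exp (l * Y ω) ≤ 1 + l * Y ω * exp (l * t) :=
              exp_le_one_add_mul_exp (mul_nonneg hl (hY0 ω))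
                (mul_le_mul_of_nonneg_left (hYt ω) hl)
          _ = _ := by ring
    _ = 1 + l * exp (l * t) * μ[Y] := by
        rw [integral_add (integrable_const 1) (hYint.const_mul _), integral_const_mul]
        simp

lemma measureReal_lt_sum_le_exp [IsProbabilityMeasure μ] {Y : ℕ → Ω → ℝ}
    (hmeas : ∀ i, Measurable (Y i)) (hindep : iIndepFun Y μ)
    (hident : ∀ i, IdentDistrib (Y i) (Y 0) μ μ) {t : ℝ}
    (hY0 : ∀ i ω, 0 ≤ Y i ω) (hYt : ∀ i ω, Y i ω ≤ t) (M : ℕ) (a : ℝ) {l : ℝ} (hl : 0 ≤ l) :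
    μ.real {ω | a < ∑ i ∈ range M, Y i ω} ≤ exp (-l * a + M * (l * exp (l * t) * μ[Y 0])) := by
  have hint : Integrable (fun ω => exp (l * (∑ i ∈ range M, Y i) ω)) μ := by
    refine .of_bound (by fun_prop) (exp (l * (M * t))) (.of_forall fun ω => ?_)
    rw [norm_of_nonneg (exp_pos _).le, exp_le_exp, Finset.sum_apply]
    refine mul_le_mul_of_nonneg_left ?_ hl
    simpa using Finset.sum_le_sum fun i (_ : i ∈ range M) => hYt i ω
  calc μ.real {ω | a < ∑ i ∈ range M, Y i ω}
      ≤ μ.real {ω | a ≤ (∑ i ∈ range M, Y i) ω} :=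
        measureReal_mono (fun ω hω => by simpa using hω.le)
    _ ≤ exp (-l * a) * mgf (Y 0) μ l ^ M := by
        have hmgf : mgf (∑ i ∈ range M, Y i) μ l = mgf (Y 0) μ l ^ M := by
          rw [hindep.mgf_sum hmeas, prod_congr rfl fun i _ =>
            mgf_congr_of_identDistrib _ _ (hident i) l, prod_const, card_range]
        exact hmgf ▸ measure_ge_le_exp_mul_mgf a hl hint
    _ ≤ exp (-l * a) * exp (M * (l * exp (l * t) * μ[Y 0])) := by
        gcongr
        calc mgf (Y 0) μ l ^ M ≤ exp (l * exp (l * t) * μ[Y 0]) ^ M := by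
              gcongr
              · exact mgf_nonneg
              · exact (mgf_le_one_add_mul_exp_mul_integral (hmeas 0) (hY0 0) (hYt 0) hl).trans
                  (by linarith [add_one_le_exp (l * exp (l * t) * μ[Y 0])])
          _ = _ := (exp_nat_mul _ _).symm
    _ = _ := (exp_add _ _).symm

lemma integral_min_le_of_measureReal_lt_le [IsProbabilityMeasure μ] {f : Ω → ℝ}
    (hf : Measurable f) (hf0 : ∀ ω, 0 ≤ f ω) {K β t : ℝ} (hβ : β < 1) (ht : 0 < t)
    (htail : ∀ s ∈ Set.Ioc 0 t, μ.real {ω | s < f ω} ≤ K * s ^ (-β)) :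
    ∫ ω, min (f ω) t ∂μ ≤ K / (1 - β) * t ^ (1 - β) := by
  have hint : Integrable (fun ω => min (f ω) t) μ :=
    .of_bound (by fun_prop) t (.of_forall fun ω => by
      rw [norm_of_nonneg (le_min (hf0 ω) ht.le)]; exact min_le_right _ _)
  set g : ℝ → ℝ := fun s => μ.real {ω | s < min (f ω) t}
  have hg_zero : ∀ s ∈ Set.Ioi t, g s = 0 := fun s hs => by
    have : {ω | s < min (f ω) t} = ∅ :=
      Set.eq_empty_of_forall_notMem fun ω hω =>
        (min_le_right (f ω) t).not_gt ((Set.mem_Ioi.1 hs).trans hω)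
    simp only [g, this, measureReal_empty]
  have hg_int : IntegrableOn g (Set.Ioc 0 t) :=
    Measure.integrableOn_of_bounded (M := 1) measure_Ioc_lt_top.ne
      (Antitone.measurable (f := g) fun _ _ hs => measureReal_mono fun _ hω =>
        hs.trans_lt hω).aestronglyMeasurable
      (.of_forall fun s => by
        rw [norm_of_nonneg measureReal_nonneg]; exact measureReal_le_one)
  have hpow_int : IntegrableOn (fun s : ℝ => K * s ^ (-β)) (Set.Ioc 0 t) :=
    ((intervalIntegrable_iff_integrableOn_Ioc_of_le ht.le).1
      (intervalIntegral.intervalIntegrable_rpow' (by linarith))).const_mul K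
  have hg_int' : IntegrableOn g (Set.Ioi t) :=
    integrableOn_zero.congr_fun (fun s hs => (hg_zero s hs).symm) measurableSet_Ioi
  calc ∫ ω, min (f ω) t ∂μ = ∫ s in Set.Ioc 0 t, g s := by
        rw [hint.integral_eq_integral_meas_lt (.of_forall fun ω => le_min (hf0 ω) ht.le),
          ← Set.Ioc_union_Ioi_eq_Ioi ht.le, setIntegral_union (Set.Ioc_disjoint_Ioi le_rfl)
            measurableSet_Ioi hg_int hg_int', setIntegral_congr_fun measurableSet_Ioi hg_zero]
        simp
    _ ≤ ∫ s in Set.Ioc 0 t, K * s ^ (-β) :=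
        setIntegral_mono_on hg_int hpow_int measurableSet_Ioc fun s hs =>
          (measureReal_mono fun ω (hω : s < min (f ω) t) =>
            hω.trans_le (min_le_left _ _)).trans (htail s hs)
    _ = K / (1 - β) * t ^ (1 - β) := by
        rw [integral_const_mul, ← intervalIntegral.integral_of_le ht.le,
          integral_rpow (.inl (by linarith)), zero_rpow (by linarith), neg_add_eq_sub]
        ring

lemma measureReal_exists_lt_le (hident : ∀ i, IdentDistrib (ξ i) (ξ 0) μ μ) (s : Finset ℕ)
    (t : ℝ) : μ.real {ω | ∃ i ∈ s, t < ξ i ω} ≤ #s * μ.real {ω | t < ξ 0 ω} := by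
  calc μ.real {ω | ∃ i ∈ s, t < ξ i ω} = μ.real (⋃ i ∈ s, ξ i ⁻¹' Set.Ioi t) := by
        congr 1; ext; simp
    _ ≤ ∑ i ∈ s, μ.real (ξ i ⁻¹' Set.Ioi t) := measureReal_biUnion_finset_le _ _
    _ = #s * μ.real {ω | t < ξ 0 ω} := by
        simp only [measureReal_def, (hident _).measure_mem_eq measurableSet_Ioi, sum_const,
          nsmul_eq_mul]
        rfl

lemma measureReal_exists_pair_lt_le [IsProbabilityMeasure μ] (hindep : iIndepFun ξ μ)
    (hident : ∀ i, IdentDistrib (ξ i) (ξ 0) μ μ) (s : Finset ℕ) (t : ℝ) :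
    μ.real {ω | ∃ i ∈ s, ∃ j ∈ s, i ≠ j ∧ t < ξ i ω ∧ t < ξ j ω}
      ≤ (#s * μ.real {ω | t < ξ 0 ω}) ^ 2 := by
  set q := μ.real {ω | t < ξ 0 ω}
  have hpair : ∀ i ∈ s, ∀ j ∈ s.erase i,
      μ.real (ξ i ⁻¹' Set.Ioi t ∩ ξ j ⁻¹' Set.Ioi t) = q * q := fun i _ j hj => by
    rw [measureReal_def, (hindep.indepFun (ne_of_mem_erase hj).symm).measure_inter_preimage_eq_mul
      _ _ measurableSet_Ioi measurableSet_Ioi, (hident i).measure_mem_eq measurableSet_Ioi,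
      (hident j).measure_mem_eq measurableSet_Ioi, ENNReal.toReal_mul]
    rfl
  calc μ.real {ω | ∃ i ∈ s, ∃ j ∈ s, i ≠ j ∧ t < ξ i ω ∧ t < ξ j ω}
      = μ.real (⋃ i ∈ s, ⋃ j ∈ s.erase i, ξ i ⁻¹' Set.Ioi t ∩ ξ j ⁻¹' Set.Ioi t) := by
        congr 1; ext; simp only [Set.mem_ofPred_eq, Set.mem_iUnion, Set.mem_inter_iff,
          Set.mem_preimage, Set.mem_Ioi, mem_erase, exists_prop]; aesop
    _ ≤ ∑ i ∈ s, ∑ j ∈ s.erase i, μ.real (ξ i ⁻¹' Set.Ioi t ∩ ξ j ⁻¹' Set.Ioi t) :=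
        (measureReal_biUnion_finset_le _ _).trans
          (sum_le_sum fun _ _ => measureReal_biUnion_finset_le _ _)
    _ ≤ ∑ i ∈ s, ∑ j ∈ s, q * q := by
        rw [sum_congr rfl fun i hi => sum_congr rfl (hpair i hi)]
        exact sum_le_sum fun _ _ =>
          sum_le_sum_of_subset_of_nonneg (erase_subset _ _) fun _ _ _ => by positivity
    _ = (#s * q) ^ 2 := by simp only [sum_const, nsmul_eq_mul]; ring

lemma one_sub_one_sub_pow_le_measureReal_lt_sum [IsProbabilityMeasure μ]
    (hmeas : ∀ i, Measurable (ξ i)) (hindep : iIndepFun ξ μ)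
    (hident : ∀ i, IdentDistrib (ξ i) (ξ 0) μ μ) (hnonneg : ∀ i ω, 0 ≤ ξ i ω) (M : ℕ) (X : ℝ) :
    1 - (1 - μ.real {ω | X < ξ 0 ω}) ^ M ≤ μ.real {ω | X < ∑ i ∈ range M, ξ i ω} := by
  have hall : μ.real (⋂ i ∈ range M, ξ i ⁻¹' Set.Iic X) = (1 - μ.real {ω | X < ξ 0 ω}) ^ M := by
    rw [measureReal_def, hindep.measure_inter_preimage_eq_mul _ fun _ _ => measurableSet_Iic,
      ENNReal.toReal_prod, prod_congr rfl fun i _ => ?_, prod_const, card_range]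
    have hcompl : {ω | X < ξ 0 ω} = (ξ 0 ⁻¹' Set.Iic X)ᶜ := by ext; simp
    rw [(hident i).measure_mem_eq measurableSet_Iic, ← measureReal_def, hcompl,
      probReal_compl_eq_one_sub ((hmeas 0) measurableSet_Iic), sub_sub_cancel]
  calc 1 - (1 - μ.real {ω | X < ξ 0 ω}) ^ M = μ.real (⋂ i ∈ range M, ξ i ⁻¹' Set.Iic X)ᶜ := by
        rw [probReal_compl_eq_one_sub (Finset.measurableSet_biInter _ fun i _ =>
          (hmeas i) measurableSet_Iic), hall]
    _ ≤ μ.real {ω | X < ∑ i ∈ range M, ξ i ω} := measureReal_mono fun ω hω => by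
        simp only [Set.mem_compl_iff, Set.mem_iInter, Set.mem_preimage, Set.mem_Iic, not_forall,
          not_le] at hω
        obtain ⟨i, hi, hlt⟩ := hω
        exact hlt.trans_le (single_le_sum (fun j _ => hnonneg j ω) hi)

lemma measureReal_lt_sum_le [IsProbabilityMeasure μ] (hindep : iIndepFun ξ μ)
    (hident : ∀ i, IdentDistrib (ξ i) (ξ 0) μ μ) (hnonneg : ∀ i ω, 0 ≤ ξ i ω) (M : ℕ)
    {X ε τ : ℝ} (hε : ε ≤ 1) (hX : 0 ≤ X) (hτ : 0 ≤ τ) :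
    μ.real {ω | X < ∑ i ∈ range M, ξ i ω} ≤
      M * μ.real {ω | (1 - ε) * X < ξ 0 ω} + (M * μ.real {ω | τ < ξ 0 ω}) ^ 2 +
        μ.real {ω | ε * X < ∑ i ∈ range M, min (ξ i ω) τ} := by
  calc μ.real {ω | X < ∑ i ∈ range M, ξ i ω}
      ≤ μ.real ({ω | ∃ i ∈ range M, (1 - ε) * X < ξ i ω} ∪
          {ω | ∃ i ∈ range M, ∃ j ∈ range M, i ≠ j ∧ τ < ξ i ω ∧ τ < ξ j ω} ∪
          {ω | ε * X < ∑ i ∈ range M, min (ξ i ω) τ}) := measureReal_mono fun ω hω => by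
        by_contra h
        simp only [Set.mem_union, Set.mem_ofPred_eq, not_or, not_exists, not_and, not_lt] at h
        refine h.2.not_gt (lt_sum_min_of_lt_sum (fun i _ => hnonneg i ω) hε hX hτ h.1.1
          (fun i hi j hj hij => ?_) hω)
        by_contra! hij'
        exact (h.1.2 i hi j hj hij hij'.1).not_gt hij'.2
    _ ≤ _ := (measureReal_union_le _ _).trans (add_le_add_left (measureReal_union_le _ _) _)
    _ ≤ _ := by
        gcongr
        · simpa using measureReal_exists_lt_le hident (range M) ((1 - ε) * X)
        · simpa using measureReal_exists_pair_lt_le hindep hident (range M) τ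

lemma measureReal_lt_sum_min_le_exp [IsProbabilityMeasure μ] (hmeas : ∀ i, Measurable (ξ i))
    (hindep : iIndepFun ξ μ) (hident : ∀ i, IdentDistrib (ξ i) (ξ 0) μ μ)
    (hnonneg : ∀ i ω, 0 ≤ ξ i ω) {K β : ℝ}
    (hK : ∀ s > 0, μ.real {ω | s < ξ 0 ω} ≤ K * s ^ (-β)) (hβ : β < 1) (M : ℕ) (a : ℝ)
    {t l : ℝ} (ht : 0 < t) (hl : 0 ≤ l) :
    μ.real {ω | a < ∑ i ∈ range M, min (ξ i ω) t}
      ≤ exp (-l * a + M * (l * exp (l * t) * (K / (1 - β) * t ^ (1 - β)))) := by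
  refine (measureReal_lt_sum_le_exp (fun i => (hmeas i).min measurable_const)
    (hindep.comp _ fun _ => measurable_id.min measurable_const)
    (fun i => (hident i).comp (measurable_id.min measurable_const))
    (fun i ω => le_min (hnonneg i ω) ht.le) (fun i ω => min_le_right _ _) M a hl).trans ?_
  gcongr
  exact integral_min_le_of_measureReal_lt_le (hmeas 0) (hnonneg 0) hβ ht fun s hs => hK s hs.1

lemma exists_eventually_measureReal_lt_sum_min_le [IsProbabilityMeasure μ]
    (hmeas : ∀ i, Measurable (ξ i)) (hindep : iIndepFun ξ μ)
    (hident : ∀ i, IdentDistrib (ξ i) (ξ 0) μ μ) (hnonneg : ∀ i ω, 0 ≤ ξ i ω)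
    {K β γ : ℝ} (hK : ∀ s > 0, μ.real {ω | s < ξ 0 ω} ≤ K * s ^ (-β)) (hγβ : γ < β)
    (hβ : β < 1) {θ ε x : ℝ} (hθ : 0 < θ) (hε : 0 < ε) (hx : 0 < x) :
    ∃ δ > 0, ∀ᶠ n : ℕ in atTop,
      μ.real {ω | ε * (x * n) < ∑ i ∈ range ⌊(n : ℝ) ^ γ⌋₊, min (ξ i ω) (δ * (x * n))}
        ≤ 2 * (n : ℝ) ^ (-θ) := by
  have hK0 : 0 ≤ K := by simpa using measureReal_nonneg.trans (hK 1 one_pos)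
  set ρ := (β - γ) / 2
  have hρ : 0 < ρ := by simp only [ρ]; linarith
  -- With `l = θ log n / (εxn)` the Chernoff factor `exp (-l εxn)` is `n^{-θ}`, and `δ` is chosen
  -- so that `exp (l δxn) = n^ρ`, which leaves the exponent `D log n / n^ρ`, small for large `n`.
  set δ := ε * ρ / θ
  refine ⟨δ, by positivity, ?_⟩
  set D := θ / (ε * x) * (K / (1 - β) * (δ * x) ^ (1 - β))
  have hD : Tendsto (fun n : ℕ => D * (log n / (n : ℝ) ^ ρ)) atTop (𝓝 0) := by
    simpa using ((isLittleO_log_rpow_atTop hρ).tendsto_div_nhds_zero.comp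
      tendsto_natCast_atTop_atTop).const_mul D
  filter_upwards [hD.eventually_le_const (log_pos one_lt_two), eventually_gt_atTop 1]
    with n hDn hn
  have hn : (1 : ℝ) < n := by exact_mod_cast hn
  have hn0 : (0 : ℝ) < n := one_pos.trans hn
  set t := δ * (x * n)
  set l := θ * log n / (ε * (x * n))
  have hl : 0 ≤ l := div_nonneg (mul_nonneg hθ.le (log_nonneg hn.le)) (by positivity)
  have hla : -l * (ε * (x * n)) = -θ * log n := by simp only [l]; field_simp
  have hlt : exp (l * t) = (n : ℝ) ^ ρ := by
    rw [rpow_def_of_pos hn0]; congr 1; simp only [l, t, δ]; field_simp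
  have hexponent : ⌊(n : ℝ) ^ γ⌋₊ * (l * exp (l * t) * (K / (1 - β) * t ^ (1 - β)))
      ≤ D * (log n / n ^ ρ) :=
    calc _ ≤ (n : ℝ) ^ γ * (l * exp (l * t) * (K / (1 - β) * t ^ (1 - β))) := by
          gcongr
          exact Nat.floor_le (by positivity)
      _ = D * (log n / n ^ ρ) := by
          have hpow : (n : ℝ) ^ γ * (n : ℝ) ^ ρ * (n : ℝ) ^ (1 - β) * n ^ ρ = n := by
            rw [← rpow_add hn0, ← rpow_add hn0, ← rpow_add hn0]
            convert rpow_one (n : ℝ) using 2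
            simp only [ρ]; ring
          have hβ' : 1 - β ≠ 0 := by linarith
          rw [hlt]
          simp only [D, l, t]
          rw [show δ * (x * n) = δ * x * n by ring, mul_rpow (by positivity) hn0.le]
          field_simp
          linear_combination (log n * K * (x * δ) ^ (1 - β)) * hpow
  calc _ ≤ exp (-θ * log n + log 2) := by
        refine (measureReal_lt_sum_min_le_exp hmeas hindep hident hnonneg hK hβ _ _
          (by positivity) hl).trans ?_
        rw [hla]
        gcongr
        exact hexponent.trans hDn
    _ = 2 * (n : ℝ) ^ (-θ) := by
        rw [exp_add, exp_log two_pos, rpow_def_of_pos hn0]; ring_nf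

end IID

/-- **Lemma 3.1(2) (heavy-tailed sums with sublinearly many terms).**
If `ξ₁, ξ₂, …` are i.i.d. non-negative with `P(ξ₁ > t) ~ C₀ t^{-α}`, `α > 0`, and
`0 < γ < min(α,1)`, then for any `x > 0`,
`P(Σ_{i=1}^{⌊n^γ⌋} ξ_i > x n) ~ C₀ x^{-α} n^{γ-α}` as `n → ∞`. -/
theorem heavy_tail_sublinear_sum_asymptotics {Ω : Type} [MeasurableSpace Ω] (μ : Measure Ω)
    (hμ : IsProbabilityMeasure μ) (ξ : ℕ → Ω → ℝ) (hmeas : ∀ i, Measurable (ξ i))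
    (hindep : iIndepFun ξ μ)
    (hident : ∀ i, IdentDistrib (ξ i) (ξ 0) μ μ)
    (hnonneg : ∀ i ω, 0 ≤ ξ i ω)
    (C₀ α : ℝ) (hC₀ : 0 < C₀) (hα : 0 < α)
    (htail : Tendsto (fun t : ℝ => (μ {ω | t < ξ 0 ω}).toReal / (C₀ * t ^ (-α)))
      atTop (nhds 1))
    (γ : ℝ) (hγ0 : 0 < γ) (hγ : γ < min α 1) (x : ℝ) (hx : 0 < x) :
    Tendsto (fun n : ℕ =>
        (μ {ω | x * n < ∑ i ∈ Finset.range ⌊(n : ℝ) ^ γ⌋₊, ξ i ω}).toReal /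
          (C₀ * x ^ (-α) * (n : ℝ) ^ (γ - α)))
      atTop (nhds 1) := by
  simp only [← measureReal_def] at htail ⊢
  have hγα : γ < α := hγ.trans_le (min_le_left _ _)
  obtain ⟨β, hγβ, hβ⟩ := exists_between hγ
  obtain ⟨K, hK⟩ := exists_le_mul_rpow_neg_of_tendsto htail hC₀ (fun _ => measureReal_le_one)
    (hγ0.trans hγβ).le (hβ.le.trans (min_le_left _ _))
  have hG : ∀ᶠ n : ℕ in atTop, 0 < C₀ * x ^ (-α) * (n : ℝ) ^ (γ - α) := by
    filter_upwards [eventually_gt_atTop 0] with n hn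
    have : (0 : ℝ) < n := by exact_mod_cast hn
    positivity
  have hg : Tendsto (fun ε : ℝ => (1 - ε) ^ (-α)) (𝓝[>] 0) (𝓝 1) := by
    have h : ContinuousAt (fun ε : ℝ => (1 - ε) ^ (-α)) 0 :=
      (continuousAt_const.sub continuousAt_id).rpow_const (.inl (by norm_num))
    simpa using h.tendsto.mono_left nhdsWithin_le_nhds
  refine tendsto_of_le_of_forall_eventually_le
    (tendsto_floor_rpow_mul_sub_sq_div htail hC₀.ne' hγ0 hγα hx) ?_ hg ?_
  · filter_upwards [hG] with n hGn
    gcongr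
    exact (mul_sub_sq_le_one_sub_one_sub_pow measureReal_nonneg measureReal_le_one _).trans
      (one_sub_one_sub_pow_le_measureReal_lt_sum hmeas hindep hident hnonneg _ _)
  · filter_upwards [Ioo_mem_nhdsGT one_pos] with ε hε
    obtain ⟨δ, hδ, hsmall⟩ := exists_eventually_measureReal_lt_sum_min_le hmeas hindep hident
      hnonneg hK hγβ (hβ.trans_le (min_le_right _ _)) hα hε.1 hx
    refine ⟨_, tendsto_floor_rpow_mul_add_sq_add_rpow_div htail hC₀.ne' hγ0 hγα hx
      (sub_pos.2 hε.2) hδ 2, ?_⟩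
    filter_upwards [hsmall, hG] with n hsmall_n hGn
    gcongr
    exact (measureReal_lt_sum_le hindep hident hnonneg _ (τ := δ * (x * n)) hε.2.le (by positivity)
      (by positivity)).trans (by linarith)
end
end
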